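/- Let λ be a partition of n = p + q with ℓ parts and assume syd(λ;p,q) ≠ ∅. Then syd(λ;p,q) has exactly one element (equivalently, the graph Γ(λ;p,q) consists of a single vertex) if and only if (a) all parts of λ are odd, and (b) either ℓ = |p − q| or all parts of λ are equal. -/

import Mathlib

open Finset

/-- A partition of `n`, given by the function `l` listing its parts in weakly
decreasing order: `l j = λ_j` is the `j`-th part for `1 ≤ j ≤ len`, and
`l j = 0` for `j > len`. -/
structure PartitionData : Type where
  l : ℕ → ℕ
  len : ℕ
  anti : ∀ j, 1 ≤ j → l (j + 1) ≤ l j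
  pos : ∀ j, 1 ≤ j → (0 < l j ↔ j ≤ len)

namespace PartitionData

/-- The multiplicity `m(i)` of `i` as a part of the partition. -/
def mult (P : PartitionData) (i : ℕ) : ℕ :=
  ((Finset.Icc 1 P.len).filter (fun j => P.l j = i)).card

/-- The finite set of (distinct) parts of the partition. -/
def partsSet (P : PartitionData) : Finset ℕ :=
  (Finset.Icc 1 P.len).image P.l

/-- The sum of the parts (i.e. the number `n` the partition partitions). -/
def boxSum (P : PartitionData) : ℕ := ∑ j ∈ Finset.Icc 1 P.len, P.l j

/-- The number of odd parts of the partition. -/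
def oddCount (P : PartitionData) : ℕ :=
  ((Finset.Icc 1 P.len).filter (fun j => Odd (P.l j))).card

end PartitionData

/-- A signed Young diagram of shape `P` and signature `(p, q)`, encoded by the
function `f` sending each part length `i` to `m_T⁺(i)`, the number of rows of
length `i` whose leading sign is `+`.  A row of length `i` with leading sign
`+` has `(i+1)/2` plus-boxes and `i/2` minus-boxes, and vice versa. -/
structure SYD (P : PartitionData) (p q : ℕ) : Type where
  f : ℕ → ℕ
  le_mult : ∀ i, f i ≤ P.mult i
  plus_eq : ∑ i ∈ P.partsSet, (f i * ((i + 1) / 2) + (P.mult i - f i) * (i / 2)) = p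
  minus_eq : ∑ i ∈ P.partsSet, (f i * (i / 2) + (P.mult i - f i) * ((i + 1) / 2)) = q

/-- `i` and `j` are consecutive distinct parts: `i > j` with no part strictly
in between (so if the distinct parts are `i_1 > ⋯ > i_k`, the pairs are
`(i_r, i_{r+1})`). -/
def Consec (P : PartitionData) (i j : ℕ) : Prop :=
  i ∈ P.partsSet ∧ j ∈ P.partsSet ∧ j < i ∧ ∀ x ∈ P.partsSet, ¬ (j < x ∧ x < i)

/-- `j` is the smallest part `i_k`. -/
def IsMinPart (P : PartitionData) (j : ℕ) : Prop :=
  j ∈ P.partsSet ∧ ∀ x ∈ P.partsSet, j ≤ x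

/-- Adjacency of signed Young diagrams with step `c`:
`π(T) - π(T') ∈ {±c(e_r - e_{r+1})} ∪ {±c e_k}` in the coordinates indexed by
the distinct parts `i_1 > ⋯ > i_k`. -/
def AdjRel (P : PartitionData) {p q : ℕ} (c : ℕ) (T T' : SYD P p q) : Prop :=
  (∃ i j, Consec P i j ∧ (∀ x, x ≠ i → x ≠ j → T.f x = T'.f x) ∧
    ((T.f i = T'.f i + c ∧ T'.f j = T.f j + c) ∨
      (T'.f i = T.f i + c ∧ T.f j = T'.f j + c)))
  ∨ (∃ j, IsMinPart P j ∧ (∀ x, x ≠ j → T.f x = T'.f x) ∧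
      (T.f j = T'.f j + c ∨ T'.f j = T.f j + c))

/-- The orbit graph `Γ(λ;p,q)` (type AIII). -/
def orbitGraph (P : PartitionData) (p q : ℕ) : SimpleGraph (SYD P p q) :=
  SimpleGraph.fromRel (AdjRel P 1)

/-! Write `λ` for the partition and `m(i)` for its multiplicities. A row of length `i` carries
`i / 2` boxes of each sign plus one extra box, of its leading sign, when `i` is odd. So if some
part is even, the leading signs of its rows can be changed freely. If all parts are odd, a
diagram is a choice of `0 ≤ f(i) ≤ m(i)` with `∑ f(i)` fixed by `p` (and `p - q = 2 ∑ f(i) - ℓ`),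
so it is unique iff `∑ f(i) ∈ {0, ℓ}`, i.e. `ℓ = |p - q|`, or there is only one distinct part. -/

namespace PartitionData

variable (P : PartitionData)

theorem mem_partsSet {i : ℕ} : i ∈ P.partsSet ↔ ∃ j, 1 ≤ j ∧ j ≤ P.len ∧ P.l j = i := by
  simp [partsSet, and_assoc]

theorem forall_mem_partsSet {r : ℕ → Prop} :
    (∀ i ∈ P.partsSet, r i) ↔ ∀ j, 1 ≤ j → j ≤ P.len → r (P.l j) := by
  simp only [partsSet, Finset.forall_mem_image, Finset.mem_Icc, and_imp]

theorem mult_pos {i : ℕ} (hi : i ∈ P.partsSet) : 0 < P.mult i := by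
  obtain ⟨j, hj1, hjn, rfl⟩ := P.mem_partsSet.1 hi
  exact Finset.card_pos.2 ⟨j, by simp [hj1, hjn]⟩

theorem mult_eq_zero {i : ℕ} (hi : i ∉ P.partsSet) : P.mult i = 0 := by
  refine Finset.card_eq_zero.2 (Finset.filter_eq_empty_iff.2 fun j hj hji => hi ?_)
  exact P.mem_partsSet.2 ⟨j, (Finset.mem_Icc.1 hj).1, (Finset.mem_Icc.1 hj).2, hji⟩

theorem sum_mult : ∑ i ∈ P.partsSet, P.mult i = P.len :=
  (Finset.card_eq_sum_card_image P.l (Finset.Icc 1 P.len)).symm.trans (by simp)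

end PartitionData

theorem mul_add_sub_mul_div_two {i f m : ℕ} (hf : f ≤ m) :
    f * ((i + 1) / 2) + (m - f) * (i / 2) = m * (i / 2) + f * (i % 2) := by
  obtain ⟨d, rfl⟩ := Nat.exists_eq_add_of_le hf
  have : (i + 1) / 2 = i / 2 + i % 2 := by omega
  rw [this, Nat.add_sub_cancel_left]
  ring

theorem mul_div_two_add_sub_mul {i f m : ℕ} (hf : f ≤ m) :
    f * (i / 2) + (m - f) * ((i + 1) / 2) = m * (i / 2) + (m - f) * (i % 2) := by
  obtain ⟨d, rfl⟩ := Nat.exists_eq_add_of_le hf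
  have : (i + 1) / 2 = i / 2 + i % 2 := by omega
  rw [this, Nat.add_sub_cancel_left]
  ring

theorem Finset.sum_update_update_of_ne {α : Type*} [DecidableEq α] {s : Finset α} {f : α → ℕ}
    {r t : α} (hr : r ∈ s) (ht : t ∈ s) (hrt : r ≠ t) (hfr : 0 < f r) :
    ∑ i ∈ s, Function.update (Function.update f r (f r - 1)) t (f t + 1) i = ∑ i ∈ s, f i := by
  have hr' : r ∈ s \ {t} := Finset.mem_sdiff.2 ⟨hr, by simpa using hrt⟩
  rw [Finset.sum_update_of_mem ht, Finset.sum_update_of_mem hr',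
    Finset.sum_eq_sum_sdiff_singleton_add ht, Finset.sum_eq_sum_sdiff_singleton_add hr']
  omega

theorem Finset.exists_pos_lt_of_ne_of_one_lt_card {α : Type*} {s : Finset α} (hs : 1 < s.card)
    {f m : α → ℕ} (hm : ∀ i ∈ s, 0 < m i) {r t : α} (hr : r ∈ s) (hfr : 0 < f r)
    (ht : t ∈ s) (hft : f t < m t) :
    ∃ r ∈ s, ∃ t ∈ s, r ≠ t ∧ 0 < f r ∧ f t < m t := by
  by_cases hrt : r = t
  · subst hrt
    obtain ⟨u, hu, hur⟩ := Finset.exists_mem_ne hs r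
    rcases Nat.eq_zero_or_pos (f u) with hfu | hfu
    · exact ⟨r, hr, u, hu, hur.symm, hfr, hfu ▸ hm u hu⟩
    · exact ⟨u, hu, r, hr, hur, hfu, hft⟩
  · exact ⟨r, hr, t, ht, hrt, hfr, hft⟩

namespace SYD

variable {P : PartitionData} {p q : ℕ}

theorem f_eq_zero (T : SYD P p q) {i : ℕ} (hi : i ∉ P.partsSet) : T.f i = 0 :=
  Nat.le_zero.1 (P.mult_eq_zero hi ▸ T.le_mult i)

theorem ext {T T' : SYD P p q} (h : ∀ i ∈ P.partsSet, T.f i = T'.f i) : T = T' := by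
  have hf : T.f = T'.f := funext fun i => by
    by_cases hi : i ∈ P.partsSet
    · exact h i hi
    · rw [T.f_eq_zero hi, T'.f_eq_zero hi]
  cases T
  cases T'
  subst hf
  rfl

theorem plus_eq_sum_mod_two (T : SYD P p q) :
    ∑ i ∈ P.partsSet, P.mult i * (i / 2) + ∑ i ∈ P.partsSet, T.f i * (i % 2) = p := by
  rw [← Finset.sum_add_distrib]
  exact (Finset.sum_congr rfl fun i _ => (mul_add_sub_mul_div_two (T.le_mult i)).symm).trans
    T.plus_eq

theorem minus_eq_sum_mod_two (T : SYD P p q) :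
    ∑ i ∈ P.partsSet, P.mult i * (i / 2) + ∑ i ∈ P.partsSet, (P.mult i - T.f i) * (i % 2) = q := by
  rw [← Finset.sum_add_distrib]
  exact (Finset.sum_congr rfl fun i _ => (mul_div_two_add_sub_mul (T.le_mult i)).symm).trans
    T.minus_eq

/-- Only the leading signs of odd rows are seen by the signature. -/
theorem exists_f_eq (T : SYD P p q) (g : ℕ → ℕ) (hg : ∀ i, g i ≤ P.mult i)
    (hgT : ∑ i ∈ P.partsSet, g i * (i % 2) = ∑ i ∈ P.partsSet, T.f i * (i % 2)) :
    ∃ T' : SYD P p q, T'.f = g := by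
  have hcompl : ∀ h : ℕ → ℕ, (∀ i, h i ≤ P.mult i) →
      ∑ i ∈ P.partsSet, (P.mult i - h i) * (i % 2) + ∑ i ∈ P.partsSet, h i * (i % 2)
        = ∑ i ∈ P.partsSet, P.mult i * (i % 2) := fun h hh => by
    rw [← Finset.sum_add_distrib]
    exact Finset.sum_congr rfl fun i _ => by rw [← add_mul, Nat.sub_add_cancel (hh i)]
  have hsub := (hcompl g hg).trans (hcompl T.f T.le_mult).symm
  rw [hgT, Nat.add_right_cancel_iff] at hsub
  refine ⟨⟨g, hg, ?_, ?_⟩, rfl⟩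
  · rw [Finset.sum_congr rfl fun i _ => mul_add_sub_mul_div_two (hg i), Finset.sum_add_distrib, hgT]
    exact T.plus_eq_sum_mod_two
  · rw [Finset.sum_congr rfl fun i _ => mul_div_two_add_sub_mul (hg i), Finset.sum_add_distrib,
      hsub]
    exact T.minus_eq_sum_mod_two

theorem exists_ne_of_even (T : SYD P p q) {i : ℕ} (hi : i ∈ P.partsSet) (heven : Even i) :
    ∃ T' : SYD P p q, T' ≠ T := by
  have hm := P.mult_pos hi
  obtain ⟨v, hv, hvT⟩ : ∃ v ≤ P.mult i, v ≠ T.f i :=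
    ⟨if T.f i = 0 then 1 else 0, by split_ifs <;> omega, by split_ifs <;> omega⟩
  obtain ⟨T', hT'⟩ := T.exists_f_eq (Function.update T.f i v)
    (fun k => by rcases eq_or_ne k i with rfl | hk <;> simp [*, T.le_mult])
    (Finset.sum_congr rfl fun k _ => by
      rcases eq_or_ne k i with rfl | hk <;> simp [*, Nat.even_iff.1 heven])
  refine ⟨T', fun h => ?_⟩
  have := congrFun hT' i
  rw [h, Function.update_self] at this
  exact hvT this.symm

section OddParts

variable (hodd : ∀ i ∈ P.partsSet, Odd i)
include hodd

theorem sum_mod_two_eq_sum (g : ℕ → ℕ) :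
    ∑ i ∈ P.partsSet, g i * (i % 2) = ∑ i ∈ P.partsSet, g i :=
  Finset.sum_congr rfl fun i hi => by rw [Nat.odd_iff.1 (hodd i hi), mul_one]

theorem sum_f_eq (T T' : SYD P p q) :
    ∑ i ∈ P.partsSet, T.f i = ∑ i ∈ P.partsSet, T'.f i := by
  have h := T.plus_eq_sum_mod_two.trans T'.plus_eq_sum_mod_two.symm
  rwa [sum_mod_two_eq_sum hodd, sum_mod_two_eq_sum hodd, Nat.add_left_cancel_iff] at h

theorem sub_eq_two_mul_sum_f_sub_len (T : SYD P p q) :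
    (p : ℤ) - q = 2 * ∑ i ∈ P.partsSet, T.f i - P.len := by
  have hp := T.plus_eq_sum_mod_two
  have hq := T.minus_eq_sum_mod_two
  have hlen : ∑ i ∈ P.partsSet, (P.mult i - T.f i) + ∑ i ∈ P.partsSet, T.f i = P.len := by
    rw [← Finset.sum_add_distrib, ← P.sum_mult]
    exact Finset.sum_congr rfl fun i _ => Nat.sub_add_cancel (T.le_mult i)
  rw [sum_mod_two_eq_sum hodd] at hp hq
  omega

/-- Moving the leading `+` from a row of length `r` to a row of length `t`. -/
theorem exists_ne_of_transfer (T : SYD P p q) {r t : ℕ} (hr : r ∈ P.partsSet)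
    (ht : t ∈ P.partsSet) (hrt : r ≠ t) (hfr : 0 < T.f r) (hft : T.f t < P.mult t) :
    ∃ T' : SYD P p q, T' ≠ T := by
  set g := Function.update (Function.update T.f r (T.f r - 1)) t (T.f t + 1)
  have hgr : g r = T.f r - 1 := by simp [g, hrt]
  have hg : ∀ i, g i ≤ P.mult i := fun i => by
    rcases eq_or_ne i t with rfl | hit
    · simpa [g] using hft
    · rcases eq_or_ne i r with rfl | hir
      · exact hgr ▸ (Nat.sub_le _ _).trans (T.le_mult i)
      · simpa [g, hit, hir] using T.le_mult i
  obtain ⟨T', hT'⟩ := T.exists_f_eq g hg (by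
    rw [sum_mod_two_eq_sum hodd, sum_mod_two_eq_sum hodd]
    exact Finset.sum_update_update_of_ne hr ht hrt hfr)
  refine ⟨T', fun h => ?_⟩
  have := congrFun hT' r
  rw [h, hgr] at this
  omega

theorem eq_of_len_eq_abs (hlen : (P.len : ℤ) = |(p : ℤ) - q|) (T T' : SYD P p q) : T = T' := by
  have hpq := sub_eq_two_mul_sum_f_sub_len hodd T
  have hS := sum_f_eq hodd T T'
  rcases abs_choice ((p : ℤ) - q) with h | h
  · have hfull : ∑ i ∈ P.partsSet, T.f i = ∑ i ∈ P.partsSet, P.mult i := by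
      rw [P.sum_mult]; omega
    have hT := (Finset.sum_eq_sum_iff_of_le fun i _ => T.le_mult i).1 hfull
    have hT' := (Finset.sum_eq_sum_iff_of_le fun i _ => T'.le_mult i).1 (hS ▸ hfull)
    exact ext fun i hi => (hT i hi).trans (hT' i hi).symm
  · have hzero : ∑ i ∈ P.partsSet, T.f i = 0 := by omega
    have hT := Finset.sum_eq_zero_iff.1 hzero
    have hT' := Finset.sum_eq_zero_iff.1 (hS ▸ hzero)
    exact ext fun i hi => (hT i hi).trans (hT' i hi).symm

theorem eq_of_card_partsSet_le_one (hcard : P.partsSet.card ≤ 1) (T T' : SYD P p q) :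
    T = T' := by
  refine ext fun i hi => ?_
  have hsingle : ∀ g : ℕ → ℕ, ∑ k ∈ P.partsSet, g k = g i := fun g =>
    Finset.sum_eq_single_of_mem i hi fun k hk hki =>
      (hki (Finset.card_le_one.1 hcard k hk i hi)).elim
  simpa only [hsingle] using sum_f_eq hodd T T'

theorem len_eq_abs_of_subsingleton [Subsingleton (SYD P p q)] (hcard : 1 < P.partsSet.card)
    (T : SYD P p q) : (P.len : ℤ) = |(p : ℤ) - q| := by
  rw [sub_eq_two_mul_sum_f_sub_len hodd T]
  suffices h : ∑ i ∈ P.partsSet, T.f i = 0 ∨ ∑ i ∈ P.partsSet, T.f i = P.len by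
    rcases h with h | h <;> simp [h, two_mul]
  by_contra! h
  obtain ⟨r, hr, hfr⟩ := Finset.exists_ne_zero_of_sum_ne_zero h.1
  obtain ⟨t, ht, hft⟩ : ∃ t ∈ P.partsSet, T.f t < P.mult t := by
    by_contra! hge
    refine h.2 (P.sum_mult ▸ Finset.sum_congr rfl fun i hi => ?_)
    exact le_antisymm (T.le_mult i) (hge i hi)
  obtain ⟨r, hr, t, ht, hrt, hfr, hft⟩ := Finset.exists_pos_lt_of_ne_of_one_lt_card hcard
    (fun i hi => P.mult_pos hi) hr (Nat.pos_of_ne_zero hfr) ht hft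
  obtain ⟨T', hT'⟩ := exists_ne_of_transfer hodd T hr ht hrt hfr hft
  exact hT' (Subsingleton.elim T' T)

end OddParts

end SYD

theorem stmt8_general (P : PartitionData) (p q : ℕ)
    (hne : Nonempty (SYD P p q)) :
    Nat.card (SYD P p q) = 1 ↔
      ((∀ j, 1 ≤ j → j ≤ P.len → Odd (P.l j)) ∧
        ((P.len : ℤ) = |(p : ℤ) - (q : ℤ)| ∨
          ∀ j j', 1 ≤ j → j ≤ P.len → 1 ≤ j' → j' ≤ P.len → P.l j = P.l j')) := by
  have hequal : (∀ j j', 1 ≤ j → j ≤ P.len → 1 ≤ j' → j' ≤ P.len → P.l j = P.l j') ↔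
      P.partsSet.card ≤ 1 := by
    simp only [Finset.card_le_one, P.forall_mem_partsSet]
    exact ⟨fun h j hj hjn j' hj' hj'n => h j j' hj hjn hj' hj'n,
      fun h j j' hj hjn hj' hj'n => h j hj hjn j' hj' hj'n⟩
  rw [hequal, ← P.forall_mem_partsSet, Nat.card_eq_one_iff_unique, and_iff_left hne]
  obtain ⟨T⟩ := hne
  constructor
  · intro hsub
    have hodd : ∀ i ∈ P.partsSet, Odd i := fun i hi => by
      by_contra heven
      obtain ⟨T', hT'⟩ := T.exists_ne_of_even hi (Nat.not_odd_iff_even.1 heven)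
      exact hT' (Subsingleton.elim T' T)
    refine ⟨hodd, or_iff_not_imp_right.2 fun hcard => ?_⟩
    exact SYD.len_eq_abs_of_subsingleton hodd (not_le.1 hcard) T
  · rintro ⟨hodd, hlen | hcard⟩
    · exact ⟨SYD.eq_of_len_eq_abs hodd hlen⟩
    · exact ⟨SYD.eq_of_card_partsSet_le_one hodd hcard⟩

/-- `syd(λ;p,q)` is a singleton (the orbit graph consists of a single vertex)
iff all parts of `λ` are odd, and either `ℓ(λ) = |p - q|` or all parts of `λ`
are equal. -/
theorem stmt8 (P : PartitionData) (p q : ℕ)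
    (hn : P.boxSum = p + q) (hne : Nonempty (SYD P p q)) :
    Nat.card (SYD P p q) = 1 ↔
      ((∀ j, 1 ≤ j → j ≤ P.len → Odd (P.l j)) ∧
        ((P.len : ℤ) = |(p : ℤ) - (q : ℤ)| ∨
          ∀ j j', 1 ≤ j → j ≤ P.len → 1 ≤ j' → j' ≤ P.len → P.l j = P.l j')) :=
  stmt8_general P p q hne
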